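/- Let M be the 6×6 real matrix with rows (1/3, 1/3, 0, 0, 0, 0), (0, 0, 1/2, 1/3, 1/3, 0), (1/3, 1/3, 0, 0, 0, 1/2), (0, 0, 0, 1/3, 1/3, 0), (1/3, 1/3, 1/2, 0, 0, 0), (0, 0, 0, 1/3, 1/3, 1/2), and let u = (1/6, 1/6, 1/6, 1/6, 1/6, 1/6)ᵀ. Then the iterates Mⁿ·u converge, as n → ∞, to the vector p = (1/10, 2/10, 2/10, 1/10, 2/10, 2/10)ᵀ. -/

import Mathlib

/-
The uniform vector splits as `u = p + w` with `M p = p` and `M w = w / 6`, where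
`w = (1/15, -1/30, -1/30, 1/15, -1/30, -1/30)ᵀ`; hence `Mⁿ u = p + 6⁻ⁿ w → p`.
-/

open Filter

/-- The column-stochastic transition matrix of the Markov chain on residues mod 6 arising
from the mixed base-{2,3} decomposition of geometric series. -/
noncomputable def markovM : Matrix (Fin 6) (Fin 6) ℝ :=
  !![1/3, 1/3, 0,   0,   0,   0;
     0,   0,   1/2, 1/3, 1/3, 0;
     1/3, 1/3, 0,   0,   0,   1/2;
     0,   0,   0,   1/3, 1/3, 0;
     1/3, 1/3, 1/2, 0,   0,   0;
     0,   0,   0,   1/3, 1/3, 1/2]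

open Matrix Topology

theorem Matrix.pow_mulVec_of_mulVec_eq_smul {ι R : Type*} [Fintype ι] [DecidableEq ι]
    [CommRing R] (A : Matrix ι ι R) {v : ι → R} {c : R} (hv : A *ᵥ v = c • v) (n : ℕ) :
    (A ^ n) *ᵥ v = c ^ n • v := by
  induction n with
  | zero => simp
  | succ n ih => rw [pow_succ', ← mulVec_mulVec, ih, mulVec_smul, hv, smul_smul, pow_succ]

theorem Matrix.tendsto_pow_mulVec_add_of_mulVec_eq {ι R : Type*} [Fintype ι] [DecidableEq ι]
    [NormedCommRing R] (A : Matrix ι ι R) {p w : ι → R} {c : R} (hp : A *ᵥ p = p) (hw : A *ᵥ w = c • w)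
    (hc : ‖c‖ < 1) :
    Tendsto (fun n : ℕ => (A ^ n) *ᵥ (p + w)) atTop (𝓝 p) := by
  have hcn : Tendsto (fun n : ℕ => c ^ n • w) atTop (𝓝 0) := by
    simpa using (tendsto_pow_atTop_nhds_zero_of_norm_lt_one hc).smul_const w
  have hp_fixed : ∀ n : ℕ, (A ^ n) *ᵥ p = p := fun n => by
    simpa using A.pow_mulVec_of_mulVec_eq_smul (c := 1) (by simpa using hp) n
  simpa [mulVec_add, hp_fixed, A.pow_mulVec_of_mulVec_eq_smul hw] using
    (tendsto_const_nhds (x := p)).add hcn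

theorem markovM_mulVec_stationary :
    markovM *ᵥ ![1/10, 2/10, 2/10, 1/10, 2/10, 2/10] = ![1/10, 2/10, 2/10, 1/10, 2/10, 2/10] := by
  ext i
  fin_cases i <;> simp [markovM, mulVec, dotProduct, Fin.sum_univ_six] <;> norm_num

theorem markovM_mulVec_eigenvector :
    markovM *ᵥ (![1/15, -1/30, -1/30, 1/15, -1/30, -1/30] : Fin 6 → ℝ) =
      (1/6 : ℝ) • ![1/15, -1/30, -1/30, 1/15, -1/30, -1/30] := by
  ext i
  fin_cases i <;> simp [markovM, mulVec, dotProduct, Fin.sum_univ_six] <;> norm_num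

/-- Starting from the uniform vector `u = (1/6,…,1/6)ᵀ`, the iterates `Mⁿ·u` converge
(entrywise) to the stationary vector `p = (1/10, 2/10, 2/10, 1/10, 2/10, 2/10)ᵀ`. -/
theorem markov_iterates_converge :
    Tendsto (fun n : ℕ => (markovM ^ n).mulVec ![1/6, 1/6, 1/6, 1/6, 1/6, 1/6]) atTop
      (nhds ![1/10, 2/10, 2/10, 1/10, 2/10, 2/10]) := by
  have hsplit : (![1/6, 1/6, 1/6, 1/6, 1/6, 1/6] : Fin 6 → ℝ) =
      ![1/10, 2/10, 2/10, 1/10, 2/10, 2/10] + ![1/15, -1/30, -1/30, 1/15, -1/30, -1/30] := by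
    ext i
    fin_cases i <;> norm_num
  rw [hsplit]
  exact markovM.tendsto_pow_mulVec_add_of_mulVec_eq markovM_mulVec_stationary
    markovM_mulVec_eigenvector (by norm_num)
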